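/- arXiv:1910.11839 — 2 statements merged into one kernel-verified Lean document; each statement's English description precedes it below -/
import Mathlib

section
/- Let (X, T) be a uniquely ergodic classical dynamical system with unique invariant measure μ, and let λ ∈ ℂ with |λ| = 1. (a) If u : X → ℂ is continuous, not identically zero, and satisfies u(T x) = λ·u(x) for all x ∈ X, then there is a constant c > 0 with |u(x)| = c for all x ∈ X. (b) If u₁, u₂ : X → ℂ are continuous, neither identically zero, and satisfy uᵢ(T x) = λ·uᵢ(x) for all x ∈ X (i = 1, 2), then there exists c ∈ ℂ with u₂ = c·u₁; in particular each peripheral eigenspace of the induced map on C(X) is one-dimensional and spanned by a unimodular function. -/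
/-!
Unique ergodicity forces `μ` to give full mass to every nonempty closed `T`-invariant set `K`:
the Krylov–Bogolyubov measure obtained (via Riesz–Markov–Kakutani) from Cesàro averages along
an orbit in `K` is an invariant regular probability measure living on `K`, hence equals `μ`.
Applied to level sets, this makes every continuous `T`-invariant function `μ`-a.e. equal to each
of its values, hence constant. For an eigenfunction `u` with `‖λ‖ = 1` the modulus `‖u‖` is
invariant; so `u₁` never vanishes and `u₂ / u₁` is invariant, hence constant.
-/

open MeasureTheory Filter Set Topology CompactlySupported CompactlySupportedContinuousMap

section BirkhoffUltralimit

variable {X : Type*} {T : X → X} {x₀ : X} {g g' : X → ℝ}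

local notation "𝒰" => ((Ultrafilter.of (atTop : Filter ℕ) : Ultrafilter ℕ) : Filter ℕ)

theorem norm_birkhoffAverage_le {E : Type*} [NormedAddCommGroup E] [NormedSpace ℝ E]
    {g : X → E} {C : ℝ} (hg : ∀ x, ‖g x‖ ≤ C) (n : ℕ) (x : X) :
    ‖birkhoffAverage ℝ T g n x‖ ≤ C := by
  rcases n.eq_zero_or_pos with rfl | hn
  · simpa using (norm_nonneg _).trans (hg x)
  have hsum : ‖birkhoffSum T g n x‖ ≤ n * C := by
    simpa [birkhoffSum] using norm_sum_le_of_le (Finset.range n) fun k _ ↦ hg (T^[k] x)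
  rw [birkhoffAverage, norm_smul, norm_inv, Real.norm_natCast, inv_mul_le_iff₀ (by positivity)]
  exact hsum

theorem birkhoffAverage_mono (h : g ≤ g') (n : ℕ) (x : X) :
    birkhoffAverage ℝ T g n x ≤ birkhoffAverage ℝ T g' n x := by
  simp only [birkhoffAverage, birkhoffSum, smul_eq_mul]
  gcongr with k
  exact h _

theorem birkhoffAverage_comp_apply (g : X → ℝ) (n : ℕ) (x : X) :
    birkhoffAverage ℝ T (g ∘ T) n x = birkhoffAverage ℝ T g n (T x) := by
  simp only [birkhoffAverage, birkhoffSum, Function.comp_apply, ← Function.iterate_succ_apply' T,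
    Function.iterate_succ_apply]

/-- A Banach-limit–type mean along the orbit of `x₀`: the ultrafilter is finer than `atTop`, so
bounded Cesàro averages converge along it by compactness. -/
noncomputable def birkhoffUltralimit (T : X → X) (x₀ : X) (g : X → ℝ) : ℝ :=
  limUnder 𝒰 (birkhoffAverage ℝ T g · x₀)

theorem tendsto_birkhoffUltralimit (hg : Bornology.IsBounded (range g)) :
    Tendsto (birkhoffAverage ℝ T g · x₀) 𝒰 (𝓝 (birkhoffUltralimit T x₀ g)) := by
  obtain ⟨C, hC⟩ := isBounded_iff_forall_norm_le.1 hg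
  have hmem : ∀ n, birkhoffAverage ℝ T g n x₀ ∈ Metric.closedBall (0 : ℝ) C := fun n ↦
    mem_closedBall_zero_iff.2 (norm_birkhoffAverage_le (fun x ↦ hC _ (mem_range_self x)) n x₀)
  obtain ⟨l, -, hl⟩ := (isCompact_closedBall (0 : ℝ) C).ultrafilter_le_nhds
    (Ultrafilter.map (birkhoffAverage ℝ T g · x₀) (Ultrafilter.of atTop))
    (le_principal_iff.2 (Filter.mem_map.2 (Eventually.of_forall hmem)))
  exact tendsto_nhds_limUnder ⟨l, hl⟩

theorem birkhoffUltralimit_eq {l : ℝ} (h : Tendsto (birkhoffAverage ℝ T g · x₀) 𝒰 (𝓝 l)) :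
    birkhoffUltralimit T x₀ g = l :=
  h.limUnder_eq

theorem birkhoffUltralimit_add (hg : Bornology.IsBounded (range g))
    (hg' : Bornology.IsBounded (range g')) :
    birkhoffUltralimit T x₀ (g + g') = birkhoffUltralimit T x₀ g + birkhoffUltralimit T x₀ g' := by
  apply birkhoffUltralimit_eq
  simpa only [birkhoffAverage_add, Pi.add_apply] using
    (tendsto_birkhoffUltralimit hg).add (tendsto_birkhoffUltralimit hg')

theorem birkhoffUltralimit_smul (c : ℝ) (hg : Bornology.IsBounded (range g)) :
    birkhoffUltralimit T x₀ (c • g) = c * birkhoffUltralimit T x₀ g := by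
  apply birkhoffUltralimit_eq
  have h : ∀ n, birkhoffAverage ℝ T (c • g) n x₀ = c * birkhoffAverage ℝ T g n x₀ := fun n ↦ by
    simp only [birkhoffAverage, birkhoffSum, Pi.smul_apply, smul_eq_mul, Finset.mul_sum,
      mul_left_comm]
  simpa only [h] using (tendsto_birkhoffUltralimit hg).const_mul c

theorem birkhoffUltralimit_mono (hg : Bornology.IsBounded (range g))
    (hg' : Bornology.IsBounded (range g')) (h : g ≤ g') :
    birkhoffUltralimit T x₀ g ≤ birkhoffUltralimit T x₀ g' :=
  le_of_tendsto_of_tendsto' (tendsto_birkhoffUltralimit hg) (tendsto_birkhoffUltralimit hg')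
    (birkhoffAverage_mono h · x₀)

theorem birkhoffUltralimit_const (c : ℝ) : birkhoffUltralimit T x₀ (fun _ ↦ c) = c := by
  apply birkhoffUltralimit_eq
  refine tendsto_const_nhds.congr' (Ultrafilter.of_le atTop ?_)
  filter_upwards [eventually_ne_atTop 0] with n hn
  rw [birkhoffAverage_of_comp_eq (R := ℝ) rfl (Nat.cast_ne_zero.2 hn)]

theorem birkhoffUltralimit_comp (hg : Bornology.IsBounded (range g)) :
    birkhoffUltralimit T x₀ (g ∘ T) = birkhoffUltralimit T x₀ g := by
  apply birkhoffUltralimit_eq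
  have hshift := (tendsto_birkhoffAverage_apply_sub_birkhoffAverage' ℝ hg T x₀).mono_left
    (Ultrafilter.of_le atTop)
  simpa only [birkhoffAverage_comp_apply, add_sub_cancel, add_zero] using
    (tendsto_birkhoffUltralimit (T := T) (x₀ := x₀) hg).add hshift

theorem birkhoffUltralimit_eq_zero (h : ∀ n, g (T^[n] x₀) = 0) :
    birkhoffUltralimit T x₀ g = 0 := by
  apply birkhoffUltralimit_eq
  simp [birkhoffAverage, birkhoffSum, h]

end BirkhoffUltralimit

namespace RealRMK

variable {X : Type*} [TopologicalSpace X] [CompactSpace X] [T2Space X] [MeasurableSpace X]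
  [BorelSpace X] (Λ : C_c(X, ℝ) →ₚ[ℝ] ℝ)

theorem isProbabilityMeasure_rieszMeasure (h : Λ (continuousMapEquiv 1) = 1) :
    IsProbabilityMeasure (rieszMeasure Λ) := by
  have h1 := integral_rieszMeasure Λ (continuousMapEquiv 1)
  rw [h] at h1
  have h2 : (rieszMeasure Λ).real univ = 1 := by simpa using h1
  exact ⟨by simpa [measureReal_def, ENNReal.toReal_eq_one_iff] using h2⟩

theorem map_rieszMeasure_eq_self {T : X → X} (hT : Continuous T)
    (h : ∀ f g : C_c(X, ℝ), ⇑g = ⇑f ∘ T → Λ g = Λ f) :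
    Measure.map T (rieszMeasure Λ) = rieszMeasure Λ := by
  have : (Measure.map T (rieszMeasure Λ)).InnerRegularCompactLTTop :=
    .map_of_continuous hT
  refine Measure.ext_of_integral_eq_on_compactlySupported fun f ↦ ?_
  let g : C_c(X, ℝ) := continuousMapEquiv ((f : C(X, ℝ)).comp ⟨T, hT⟩)
  rw [integral_map hT.aemeasurable (map_continuous f).aestronglyMeasurable,
    integral_rieszMeasure Λ f, ← h f g rfl, ← integral_rieszMeasure Λ g]
  rfl

theorem rieszMeasure_compl_eq_zero {K : Set X} (hK : IsClosed K)
    (h : ∀ f : C_c(X, ℝ), 0 ≤ f → EqOn f 0 K → Λ f = 0) :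
    rieszMeasure Λ Kᶜ = 0 := by
  rw [hK.isOpen_compl.measure_eq_iSup_isCompact, ← nonpos_iff_eq_zero]
  refine iSup₂_le fun C hCK ↦ iSup_le fun hC ↦ ?_
  obtain ⟨f, hfK, hfC, hf01⟩ := exists_continuous_zero_one_of_isClosed hK hC.isClosed
    (disjoint_compl_right.mono_right hCK)
  have hf0 : ∀ x, 0 ≤ f x := fun x ↦ (hf01 x).1
  calc rieszMeasure Λ C ≤ ENNReal.ofReal (Λ (continuousMapEquiv f)) :=
        rieszMeasure_le_of_eq_one Λ hf0 hC hfC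
    _ = 0 := by rw [h _ hf0 hfK, ENNReal.ofReal_zero]

end RealRMK

section KrylovBogolyubov

variable {X : Type*} [TopologicalSpace X] [CompactSpace X]

theorem isBounded_range_of_compactSpace (f : C_c(X, ℝ)) : Bornology.IsBounded (range f) :=
  (isCompact_range (map_continuous f)).isBounded

noncomputable def birkhoffUltralimitCc (T : X → X) (x₀ : X) : C_c(X, ℝ) →ₚ[ℝ] ℝ where
  toFun f := birkhoffUltralimit T x₀ f
  map_add' f g :=
    birkhoffUltralimit_add (isBounded_range_of_compactSpace f) (isBounded_range_of_compactSpace g)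
  map_smul' c f := birkhoffUltralimit_smul c (isBounded_range_of_compactSpace f)
  monotone' _ _ h :=
    birkhoffUltralimit_mono (isBounded_range_of_compactSpace _) (isBounded_range_of_compactSpace _) h

theorem exists_invariant_isProbabilityMeasure_compl_eq_zero [T2Space X] [MeasurableSpace X]
    [BorelSpace X] {T : X → X} (hT : Continuous T) {K : Set X} (hK : IsClosed K)
    (hKT : MapsTo T K K) (hK₀ : K.Nonempty) :
    ∃ ν : Measure X, IsProbabilityMeasure ν ∧ ν.Regular ∧ Measure.map T ν = ν ∧ ν Kᶜ = 0 := by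
  obtain ⟨x₀, hx₀⟩ := hK₀
  let Λ := birkhoffUltralimitCc T x₀
  refine ⟨RealRMK.rieszMeasure Λ, ?_, inferInstance, ?_, ?_⟩
  · exact RealRMK.isProbabilityMeasure_rieszMeasure Λ (birkhoffUltralimit_const 1)
  · refine RealRMK.map_rieszMeasure_eq_self Λ hT fun f g hg ↦ ?_
    change birkhoffUltralimit T x₀ g = birkhoffUltralimit T x₀ f
    rw [hg, birkhoffUltralimit_comp (isBounded_range_of_compactSpace f)]
  · exact RealRMK.rieszMeasure_compl_eq_zero Λ hK fun f _ hf ↦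
      birkhoffUltralimit_eq_zero fun n ↦ hf (hKT.iterate n hx₀)

end KrylovBogolyubov

section UniquelyErgodic

variable {X : Type*} [TopologicalSpace X] [CompactSpace X] [T2Space X] [MeasurableSpace X]
  [BorelSpace X] {T : X → X} {μ : Measure X}

theorem measure_compl_eq_zero_of_uniquelyErgodic (hT : Continuous T)
    (huniq : ∀ ν : Measure X, IsProbabilityMeasure ν → ν.Regular → Measure.map T ν = ν → ν = μ)
    {K : Set X} (hK : IsClosed K) (hKT : MapsTo T K K) (hK₀ : K.Nonempty) : μ Kᶜ = 0 := by
  obtain ⟨ν, hν, hνreg, hνT, hνK⟩ :=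
    exists_invariant_isProbabilityMeasure_compl_eq_zero hT hK hKT hK₀
  rwa [← huniq ν hν hνreg hνT]

theorem eq_of_comp_eq_of_uniquelyErgodic [IsProbabilityMeasure μ] (hT : Continuous T)
    (huniq : ∀ ν : Measure X, IsProbabilityMeasure ν → ν.Regular → Measure.map T ν = ν → ν = μ)
    {Y : Type*} [TopologicalSpace Y] [T1Space Y] {F : X → Y} (hF : Continuous F)
    (hFT : ∀ x, F (T x) = F x) (x y : X) : F x = F y := by
  have hlevel : ∀ z, ∀ᵐ w ∂μ, F w = F z := fun z ↦
    measure_compl_eq_zero_of_uniquelyErgodic hT huniq (isClosed_singleton.preimage hF)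
      (fun w hw ↦ (hFT w).trans hw) ⟨z, rfl⟩
  obtain ⟨w, hwx, hwy⟩ := ((hlevel x).and (hlevel y)).exists
  exact hwx.symm.trans hwy

variable {𝕜 : Type*} [NormedField 𝕜] {lam : 𝕜}

theorem exists_norm_eq_const_of_eigenfunction [IsProbabilityMeasure μ] (hT : Continuous T)
    (huniq : ∀ ν : Measure X, IsProbabilityMeasure ν → ν.Regular → Measure.map T ν = ν → ν = μ)
    (hlam : ‖lam‖ = 1) {u : X → 𝕜} (hu : Continuous u) (hu₀ : ¬ ∀ x, u x = 0)
    (hTu : ∀ x, u (T x) = lam * u x) : ∃ c : ℝ, 0 < c ∧ ∀ x, ‖u x‖ = c := by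
  obtain ⟨x₁, hx₁⟩ := not_forall.1 hu₀
  refine ⟨‖u x₁‖, norm_pos_iff.2 hx₁, fun x ↦ ?_⟩
  refine eq_of_comp_eq_of_uniquelyErgodic hT huniq hu.norm (fun y ↦ ?_) x x₁
  rw [hTu, norm_mul, hlam, one_mul]

theorem exists_eq_const_mul_of_eigenfunction [IsProbabilityMeasure μ] (hT : Continuous T)
    (huniq : ∀ ν : Measure X, IsProbabilityMeasure ν → ν.Regular → Measure.map T ν = ν → ν = μ)
    (hlam : ‖lam‖ = 1) {u₁ u₂ : X → 𝕜} (hu₁ : Continuous u₁) (hu₂ : Continuous u₂)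
    (hu₁₀ : ¬ ∀ x, u₁ x = 0) (hTu₁ : ∀ x, u₁ (T x) = lam * u₁ x)
    (hTu₂ : ∀ x, u₂ (T x) = lam * u₂ x) : ∃ c : 𝕜, ∀ x, u₂ x = c * u₁ x := by
  obtain ⟨c₁, hc₁, hu₁c₁⟩ := exists_norm_eq_const_of_eigenfunction hT huniq hlam hu₁ hu₁₀ hTu₁
  have hu₁ne : ∀ x, u₁ x ≠ 0 := fun x ↦ norm_pos_iff.1 (hu₁c₁ x ▸ hc₁)
  have hlam₀ : lam ≠ 0 := norm_ne_zero_iff.1 (hlam ▸ one_ne_zero)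
  obtain ⟨x₁, -⟩ := not_forall.1 hu₁₀
  refine ⟨u₂ x₁ / u₁ x₁, fun x ↦ ?_⟩
  have hratio := eq_of_comp_eq_of_uniquelyErgodic hT huniq (F := fun y ↦ u₂ y / u₁ y)
    (hu₂.div hu₁ hu₁ne) (fun y ↦ by rw [hTu₁, hTu₂, mul_div_mul_left _ _ hlam₀]) x x₁
  rw [← hratio, div_mul_cancel₀ _ (hu₁ne x)]

end UniquelyErgodic

theorem stmt9_general {X : Type*} [TopologicalSpace X] [CompactSpace X] [T2Space X]
    [MeasurableSpace X] [BorelSpace X]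
    (T : X → X) (hT : Continuous T)
    (μ : Measure X) [IsProbabilityMeasure μ]
    (huniq : ∀ ν : Measure X, IsProbabilityMeasure ν → ν.Regular →
      Measure.map T ν = ν → ν = μ)
    (lam : ℂ) (hlam : ‖lam‖ = 1) :
    (∀ u : X → ℂ, Continuous u → (¬ ∀ x, u x = 0) → (∀ x, u (T x) = lam * u x) →
      ∃ c : ℝ, 0 < c ∧ ∀ x, ‖u x‖ = c) ∧
    (∀ u₁ u₂ : X → ℂ, Continuous u₁ → Continuous u₂ →
      (¬ ∀ x, u₁ x = 0) → (¬ ∀ x, u₂ x = 0) →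
      (∀ x, u₁ (T x) = lam * u₁ x) → (∀ x, u₂ (T x) = lam * u₂ x) →
      ∃ c : ℂ, ∀ x, u₂ x = c * u₁ x) :=
  ⟨fun _ hu hu₀ hTu ↦ exists_norm_eq_const_of_eigenfunction hT huniq hlam hu hu₀ hTu,
    fun _ _ hu₁ hu₂ hu₁₀ _ hTu₁ hTu₂ ↦
      exists_eq_const_mul_of_eigenfunction hT huniq hlam hu₁ hu₂ hu₁₀ hTu₁ hTu₂⟩

/-- For a uniquely ergodic system `(X, T, μ)` and unimodular `λ`: (a) any nonzero continuous
eigenfunction with eigenvalue `λ` has constant nonzero modulus; (b) any two nonzero continuous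
eigenfunctions with eigenvalue `λ` are proportional (each peripheral eigenspace of the induced
map on `C(X)` is one-dimensional, spanned by a unimodular function). -/
theorem stmt9 {X : Type*} [TopologicalSpace X] [CompactSpace X] [T2Space X] [Nonempty X]
    [MeasurableSpace X] [BorelSpace X]
    (T : X → X) (hT : Continuous T)
    (μ : Measure X) [IsProbabilityMeasure μ] [μ.Regular] (hμ : Measure.map T μ = μ)
    (huniq : ∀ ν : Measure X, IsProbabilityMeasure ν → ν.Regular →
      Measure.map T ν = ν → ν = μ)
    (lam : ℂ) (hlam : ‖lam‖ = 1) :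
    (∀ u : X → ℂ, Continuous u → (¬ ∀ x, u x = 0) → (∀ x, u (T x) = lam * u x) →
      ∃ c : ℝ, 0 < c ∧ ∀ x, ‖u x‖ = c) ∧
    (∀ u₁ u₂ : X → ℂ, Continuous u₁ → Continuous u₂ →
      (¬ ∀ x, u₁ x = 0) → (¬ ∀ x, u₂ x = 0) →
      (∀ x, u₁ (T x) = lam * u₁ x) → (∀ x, u₂ (T x) = lam * u₂ x) →
      ∃ c : ℂ, ∀ x, u₂ x = c * u₁ x) :=
  stmt9_general T hT μ huniq lam hlam
end

section
/- Let (X, T) be a uniquely ergodic classical dynamical system with unique invariant measure μ. Then the set σ := { λ ∈ ℂ : |λ| = 1 and there exists a continuous u : X → ℂ, not identically zero, with u(T x) = λ·u(x) for all x ∈ X } is a subgroup of the circle group: it contains 1, is closed under multiplication, and is closed under inversion (complex conjugation). -/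
/-!
The only nontrivial point is that the product of two nonzero eigenfunctions is not identically
zero. Any limit, along an ultrafilter, of the Birkhoff averages along the orbit of a point `x₀`
is a positive functional on `C(X)`, hence (Riesz–Markov–Kakutani) an invariant Radon probability
measure (Krylov–Bogolyubov), which by unique ergodicity is `μ`. Integrating `|φ - φ x₀|` then
shows that a continuous `T`-invariant `φ` equals `φ x₀` `μ`-a.e., for every `x₀`. Applied to the
modulus of an eigenfunction `u` with `u x₀ ≠ 0`, this makes `u` nonzero `μ`-a.e., so a product of
two such eigenfunctions is nonzero somewhere. Inverses come from complex conjugation.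
-/

open MeasureTheory Filter Topology Set
open scoped CompactlySupported

section BirkhoffAverage

variable {α : Type*} {f : α → α} {g : α → ℝ} {x : α}

lemma birkhoffAverage_nonneg (hg : ∀ k, 0 ≤ g (f^[k] x)) (n : ℕ) :
    0 ≤ birkhoffAverage ℝ f g n x :=
  smul_nonneg (by positivity) (Finset.sum_nonneg fun k _ ↦ hg k)

lemma abs_birkhoffAverage_le {C : ℝ} (hC : 0 ≤ C) (hg : ∀ k, |g (f^[k] x)| ≤ C) (n : ℕ) :
    |birkhoffAverage ℝ f g n x| ≤ C := by
  rcases Nat.eq_zero_or_pos n with rfl | hn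
  · simpa using hC
  rw [birkhoffAverage, birkhoffSum, smul_eq_mul, abs_mul, abs_inv, Nat.abs_cast,
    inv_mul_le_iff₀ (by positivity)]
  calc |∑ k ∈ Finset.range n, g (f^[k] x)| ≤ ∑ k ∈ Finset.range n, |g (f^[k] x)| :=
        Finset.abs_sum_le_sum_abs _ _
    _ ≤ n * C := by simpa using Finset.sum_le_sum fun k (_ : k ∈ Finset.range n) ↦ hg k

lemma birkhoffAverage_smul (c : ℝ) (n : ℕ) :
    birkhoffAverage ℝ f (c • g) n x = c * birkhoffAverage ℝ f g n x := by
  simp [birkhoffAverage, birkhoffSum, Finset.mul_sum, mul_left_comm]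

lemma birkhoffAverage_comp_apply_s10 {R M : Type*} [DivisionSemiring R] [AddCommMonoid M] [Module R M]
    (f : α → α) (g : α → M) (n : ℕ) (x : α) :
    birkhoffAverage R f (g ∘ f) n x = birkhoffAverage R f g n (f x) := by
  simp [birkhoffAverage, birkhoffSum, ← Function.iterate_succ_apply' f, Function.iterate_succ_apply]

lemma isBounded_range_birkhoffAverage (hg : Bornology.IsBounded (range g)) :
    Bornology.IsBounded (range (birkhoffAverage ℝ f g · x)) := by
  obtain ⟨C, hC, hgC⟩ := hg.exists_pos_norm_le
  refine (Metric.isBounded_Icc (-C) C).subset <| range_subset_iff.2 fun n ↦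
    abs_le.1 <| abs_birkhoffAverage_le hC.le (fun k ↦ hgC _ (mem_range_self _)) n

end BirkhoffAverage

lemma Ultrafilter.exists_tendsto_of_isBounded {ι E : Type*} [PseudoMetricSpace E] [ProperSpace E]
    (𝒰 : Ultrafilter ι) {u : ι → E}
    (hu : Bornology.IsBounded (range u)) : ∃ a, Tendsto u 𝒰 (𝓝 a) := by
  obtain ⟨a, -, ha⟩ := hu.isCompact_closure.ultrafilter_le_nhds (𝒰.map u)
    (le_principal_iff.2 (mem_map.2 (univ_mem' fun n ↦ subset_closure (mem_range_self n))))
  exact ⟨a, ha⟩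

section KrylovBogolyubov

variable {X : Type*} [TopologicalSpace X]

lemma isProbabilityMeasure_of_tendsto_birkhoffAverage [MeasurableSpace X] {T : X → X} {x₀ : X}
    {𝒰 : Ultrafilter ℕ} {ν : Measure X} (h𝒰 : (𝒰 : Filter ℕ) ≤ atTop)
    (hν : ∀ g : C(X, ℝ), Tendsto (birkhoffAverage ℝ T g · x₀) 𝒰 (𝓝 (∫ x, g x ∂ν))) :
    IsProbabilityMeasure ν := by
  have hone : Tendsto (birkhoffAverage ℝ T (1 : C(X, ℝ)) · x₀) 𝒰 (𝓝 1) :=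
    tendsto_const_nhds.congr' <| Eventually.mono (h𝒰 (eventually_ne_atTop 0)) fun n hn ↦ by
      simp [birkhoffAverage, birkhoffSum, hn]
  have := tendsto_nhds_unique (hν 1) hone
  simp only [ContinuousMap.one_apply, integral_const, smul_eq_mul, mul_one] at this
  exact ⟨(ENNReal.toReal_eq_one_iff _).1 this⟩

variable [CompactSpace X]

lemma tendsto_birkhoffAverage_limUnder (𝒰 : Ultrafilter ℕ) {g : X → ℝ} (hg : Continuous g)
    (T : X → X) (x₀ : X) :
    Tendsto (birkhoffAverage ℝ T g · x₀) 𝒰 (𝓝 (limUnder 𝒰 (birkhoffAverage ℝ T g · x₀))) :=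
  tendsto_nhds_limUnder <| 𝒰.exists_tendsto_of_isBounded <|
    isBounded_range_birkhoffAverage (isCompact_range hg).isBounded

variable [T2Space X]

noncomputable def birkhoffLimitFunctional (T : X → X) (x₀ : X) (𝒰 : Ultrafilter ℕ) :
    C_c(X, ℝ) →ₚ[ℝ] ℝ :=
  PositiveLinearMap.mk₀
    { toFun g := limUnder 𝒰 (birkhoffAverage ℝ T g · x₀)
      map_add' g h := by
        refine tendsto_nhds_unique
          (tendsto_birkhoffAverage_limUnder 𝒰 (map_continuous (g + h)) T x₀) ?_
        rw [CompactlySupportedContinuousMap.coe_add, birkhoffAverage_add]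
        exact (tendsto_birkhoffAverage_limUnder 𝒰 (map_continuous g) T x₀).add
          (tendsto_birkhoffAverage_limUnder 𝒰 (map_continuous h) T x₀)
      map_smul' c g := by
        refine tendsto_nhds_unique
          (tendsto_birkhoffAverage_limUnder 𝒰 (map_continuous (c • g)) T x₀) ?_
        simp only [CompactlySupportedContinuousMap.coe_smul, birkhoffAverage_smul,
          RingHom.id_apply, smul_eq_mul]
        exact (tendsto_birkhoffAverage_limUnder 𝒰 (map_continuous g) T x₀).const_mul c }
    fun g hg ↦ ge_of_tendsto' (tendsto_birkhoffAverage_limUnder 𝒰 (map_continuous g) T x₀)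
      (birkhoffAverage_nonneg fun _ ↦ hg _)

variable [MeasurableSpace X] [BorelSpace X] {T : X → X} {x₀ : X} {𝒰 : Ultrafilter ℕ}
  {ν : Measure X}

lemma map_eq_of_tendsto_birkhoffAverage [IsFiniteMeasure ν] [ν.Regular] (hT : Continuous T)
    (h𝒰 : (𝒰 : Filter ℕ) ≤ atTop)
    (hν : ∀ g : C(X, ℝ), Tendsto (birkhoffAverage ℝ T g · x₀) 𝒰 (𝓝 (∫ x, g x ∂ν))) :
    Measure.map T ν = ν := by
  have : (Measure.map T ν).InnerRegularCompactLTTop := .map_of_continuous hT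
  refine Measure.ext_of_integral_eq_on_compactlySupported fun g ↦ ?_
  rw [integral_map hT.aemeasurable (map_continuous g).aestronglyMeasurable]
  have hshift := (tendsto_birkhoffAverage_apply_sub_birkhoffAverage' ℝ
    (isCompact_range (map_continuous g)).isBounded T x₀).mono_left h𝒰
  refine tendsto_nhds_unique (hν ((g : C(X, ℝ)).comp ⟨T, hT⟩)) ?_
  simp only [ContinuousMap.coe_comp, ContinuousMap.coe_mk, birkhoffAverage_comp_apply_s10]
  simpa using (hν g).add hshift

theorem exists_invariant_tendsto_birkhoffAverage (hT : Continuous T) (x₀ : X)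
    (h𝒰 : (𝒰 : Filter ℕ) ≤ atTop) :
    ∃ ν : Measure X, IsProbabilityMeasure ν ∧ ν.Regular ∧ Measure.map T ν = ν ∧
      ∀ g : C(X, ℝ), Tendsto (birkhoffAverage ℝ T g · x₀) 𝒰 (𝓝 (∫ x, g x ∂ν)) := by
  set ν := RealRMK.rieszMeasure (birkhoffLimitFunctional T x₀ 𝒰)
  have hν (g : C(X, ℝ)) : Tendsto (birkhoffAverage ℝ T g · x₀) 𝒰 (𝓝 (∫ x, g x ∂ν)) := by
    have := RealRMK.integral_rieszMeasure (birkhoffLimitFunctional T x₀ 𝒰)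
      (CompactlySupportedContinuousMap.continuousMapEquiv g)
    simp only [CompactlySupportedContinuousMap.continuousMapEquiv_apply_toFun] at this
    rw [this]
    exact tendsto_birkhoffAverage_limUnder 𝒰 (map_continuous g) T x₀
  exact ⟨ν, isProbabilityMeasure_of_tendsto_birkhoffAverage h𝒰 hν, inferInstance,
    map_eq_of_tendsto_birkhoffAverage hT h𝒰 hν, hν⟩

end KrylovBogolyubov

section UniquelyErgodic

variable {X : Type*} [TopologicalSpace X] [CompactSpace X] [T2Space X]
  [MeasurableSpace X] [BorelSpace X] {T : X → X} {μ : Measure X}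

theorem ae_eq_zero_of_forall_iterate_eq_zero (hT : Continuous T)
    (huniq : ∀ ν : Measure X, IsProbabilityMeasure ν → ν.Regular →
      Measure.map T ν = ν → ν = μ)
    {g : C(X, ℝ)} (hg : 0 ≤ g) {x₀ : X} (horb : ∀ n, g (T^[n] x₀) = 0) : g =ᵐ[μ] 0 := by
  obtain ⟨ν, hprob, hreg, hinv, hν⟩ :=
    exists_invariant_tendsto_birkhoffAverage hT x₀ (Ultrafilter.of_le (atTop : Filter ℕ))
  obtain rfl := huniq ν hprob hreg hinv
  have hzero : ∫ x, g x ∂ν = 0 :=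
    tendsto_nhds_unique (hν g) (by simp [birkhoffAverage, birkhoffSum, horb])
  exact (integral_eq_zero_iff_of_nonneg hg
    ((map_continuous g).integrable_of_hasCompactSupport (.of_compactSpace _))).1 hzero

theorem ae_eq_of_comp_eq (hT : Continuous T)
    (huniq : ∀ ν : Measure X, IsProbabilityMeasure ν → ν.Regular →
      Measure.map T ν = ν → ν = μ)
    {φ : X → ℝ} (hφ : Continuous φ) (hinv : φ ∘ T = φ) (x₀ : X) : ∀ᵐ x ∂μ, φ x = φ x₀ := by
  let g : C(X, ℝ) := ⟨fun x ↦ |φ x - φ x₀|, by fun_prop⟩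
  have hg : g =ᵐ[μ] 0 :=
    ae_eq_zero_of_forall_iterate_eq_zero hT huniq (x₀ := x₀) (fun x ↦ abs_nonneg _) fun n ↦ by
      simp [g, show φ (T^[n] x₀) = φ x₀ from congrFun (Function.iterate_invariant hinv n) x₀]
  filter_upwards [hg] with x hx
  simpa [g, sub_eq_zero] using hx

theorem ae_ne_zero_of_apply_eq_mul (hT : Continuous T)
    (huniq : ∀ ν : Measure X, IsProbabilityMeasure ν → ν.Regular →
      Measure.map T ν = ν → ν = μ)
    {𝕜 : Type*} [NormedDivisionRing 𝕜] {u : X → 𝕜} (hu : Continuous u) {c : 𝕜} (hc : ‖c‖ = 1)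
    (heig : ∀ x, u (T x) = c * u x) {x₀ : X} (hx₀ : u x₀ ≠ 0) : ∀ᵐ x ∂μ, u x ≠ 0 := by
  have hinv : (‖u ·‖) ∘ T = (‖u ·‖) := funext fun x ↦ by simp [heig, hc]
  filter_upwards [ae_eq_of_comp_eq hT huniq hu.norm hinv x₀] with x hx
  exact norm_ne_zero_iff.1 (hx ▸ norm_ne_zero_iff.2 hx₀)

end UniquelyErgodic

theorem stmt10_general {X : Type*} [TopologicalSpace X] [CompactSpace X] [T2Space X] [Nonempty X]
    [MeasurableSpace X] [BorelSpace X]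
    (T : X → X) (hT : Continuous T)
    (μ : Measure X) [IsProbabilityMeasure μ]
    (huniq : ∀ ν : Measure X, IsProbabilityMeasure ν → ν.Regular →
      Measure.map T ν = ν → ν = μ)
    (S : Set ℂ)
    (hS : S = {lam : ℂ | ‖lam‖ = 1 ∧ ∃ u : X → ℂ, Continuous u ∧ (¬ ∀ x, u x = 0) ∧
      ∀ x, u (T x) = lam * u x}) :
    (1 ∈ S) ∧ (∀ l₁ ∈ S, ∀ l₂ ∈ S, l₁ * l₂ ∈ S) ∧ (∀ l ∈ S, l⁻¹ ∈ S) := by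
  subst hS
  refine ⟨⟨norm_one, fun _ ↦ 1, continuous_const,
    fun h ↦ one_ne_zero (h (Classical.arbitrary X)), fun _ ↦ (mul_one 1).symm⟩, ?_, ?_⟩
  · rintro l₁ ⟨hl₁, u₁, hu₁, hne₁, heig₁⟩ l₂ ⟨hl₂, u₂, hu₂, hne₂, heig₂⟩
    obtain ⟨x₁, hx₁⟩ := not_forall.1 hne₁
    obtain ⟨x₂, hx₂⟩ := not_forall.1 hne₂
    have hprod : ∀ᵐ x ∂μ, u₁ x ≠ 0 ∧ u₂ x ≠ 0 :=
      (ae_ne_zero_of_apply_eq_mul hT huniq hu₁ hl₁ heig₁ hx₁).and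
        (ae_ne_zero_of_apply_eq_mul hT huniq hu₂ hl₂ heig₂ hx₂)
    obtain ⟨x, hx⟩ := hprod.exists
    refine ⟨by simp [hl₁, hl₂], u₁ * u₂, hu₁.mul hu₂, fun h ↦ mul_ne_zero hx.1 hx.2 (h x),
      fun x ↦ by simp only [Pi.mul_apply, heig₁, heig₂]; ring⟩
  · rintro l ⟨hl, u, hu, hne, heig⟩
    refine ⟨by simp [hl], fun x ↦ starRingEnd ℂ (u x), Complex.continuous_conj.comp hu,
      fun h ↦ hne fun x ↦ by simpa using h x, fun x ↦ ?_⟩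
    simp only [heig, map_mul, Complex.inv_eq_conj hl]

/-- For a uniquely ergodic system `(X, T, μ)`, the set of unimodular eigenvalues admitting a
nonzero continuous eigenfunction is a subgroup of the circle group: it contains `1`, is closed
under multiplication, and is closed under inversion. -/
theorem stmt10 {X : Type*} [TopologicalSpace X] [CompactSpace X] [T2Space X] [Nonempty X]
    [MeasurableSpace X] [BorelSpace X]
    (T : X → X) (hT : Continuous T)
    (μ : Measure X) [IsProbabilityMeasure μ] [μ.Regular] (hμ : Measure.map T μ = μ)
    (huniq : ∀ ν : Measure X, IsProbabilityMeasure ν → ν.Regular →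
      Measure.map T ν = ν → ν = μ)
    (S : Set ℂ)
    (hS : S = {lam : ℂ | ‖lam‖ = 1 ∧ ∃ u : X → ℂ, Continuous u ∧ (¬ ∀ x, u x = 0) ∧
      ∀ x, u (T x) = lam * u x}) :
    (1 ∈ S) ∧ (∀ l₁ ∈ S, ∀ l₂ ∈ S, l₁ * l₂ ∈ S) ∧ (∀ l ∈ S, l⁻¹ ∈ S) :=
  stmt10_general T hT μ huniq S hS
end
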